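/- Let P and Q be probability measures on a measurable space Ω with P absolutely continuous with respect to Q. Then the Kullback–Leibler divergence admits the dual (Donsker–Varadhan) representation D_KL(P‖Q) = sup_T ( E_P[T] − log E_Q[e^T] ), where the supremum is taken over all measurable functions T : Ω → ℝ such that both expectations E_P[T] and E_Q[e^T] are finite. -/

import Mathlib

/-!
For an admissible `T`, `∫ llr P Q ∂P - (∫ T ∂P - log ∫ exp T ∂Q)` is the divergence of `P` from
the tilted measure `Q.tilted T`, so it is nonnegative by Gibbs' inequality. Conversely the
log-densities clipped to `[-n, n]` are bounded test functions whose `Q`-exponential moments are at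
most `1 + exp (-n)`, and whose `P`-integrals converge to `∫ llr P Q ∂P` by dominated convergence.

When `llr P Q` is not `P`-integrable, both sides are `0`: `klDiv` by the junk value of the Bochner
integral, the supremum because the set is unbounded. Indeed the negative part of `llr P Q` is always
`P`-integrable, so a bound on the values at the clipped test functions would make its positive part
integrable by monotone convergence.
-/

open MeasureTheory

/-- Kullback–Leibler divergence `D_KL(P‖Q) = E_P[log (dP/dQ)]`. -/
noncomputable def klDiv {Ω : Type*} [MeasurableSpace Ω] (P Q : Measure Ω) : ℝ :=
  ∫ x, Real.log ((P.rnDeriv Q) x).toReal ∂P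

open Real Filter Topology

section Truncation

lemma abs_max_min_neg_le {a b : ℝ} (hb : 0 ≤ b) : |max (min a b) (-b)| ≤ |a| := by
  rw [abs_le]; constructor <;> cases abs_cases a <;> grind

lemma min_posPart_le_max_min_neg_add_negPart {a b : ℝ} (hb : 0 ≤ b) :
    min a⁺ b ≤ max (min a b) (-b) + a⁻ := by
  rw [posPart_def, negPart_def]; grind

lemma tendsto_max_min_natCast_neg (a : ℝ) :
    Tendsto (fun n : ℕ ↦ max (min a n) (-n)) atTop (𝓝 a) :=
  tendsto_atTop_of_eventually_const fun n hn ↦ by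
    have : |a| ≤ n := (Nat.le_ceil _).trans (Nat.cast_le.2 hn)
    rw [abs_le] at this
    rw [min_eq_left this.2, max_eq_left this.1]

variable {α : Type*} [MeasurableSpace α] {μ : Measure α}

lemma integrable_of_forall_integral_min_le [IsFiniteMeasure μ] {f : α → ℝ}
    (hf : AEStronglyMeasurable f μ) (hf_nonneg : 0 ≤ᵐ[μ] f) {C : ℝ}
    (hC : ∀ n : ℕ, ∫ x, min (f x) n ∂μ ≤ C) : Integrable f μ := by
  refine ⟨hf, (hasFiniteIntegral_iff_ofReal hf_nonneg).2 ?_⟩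
  have h_tendsto : Tendsto (fun n : ℕ ↦ ∫⁻ x, ENNReal.ofReal (min (f x) n) ∂μ) atTop
      (𝓝 (∫⁻ x, ENNReal.ofReal (f x) ∂μ)) := by
    refine lintegral_tendsto_of_tendsto_of_monotone (fun n ↦ ?_) (.of_forall fun x m n hmn ↦ ?_)
      (.of_forall fun x ↦ ?_)
    · exact (hf.aemeasurable.min aemeasurable_const).ennreal_ofReal
    · exact ENNReal.ofReal_le_ofReal (min_le_min_left _ (Nat.cast_le.2 hmn))
    · exact (ENNReal.continuous_ofReal.tendsto _).comp <| tendsto_atTop_of_eventually_const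
        fun n hn ↦ min_eq_left ((Nat.le_ceil _).trans (Nat.cast_le.2 hn))
  refine (le_of_tendsto' h_tendsto fun n ↦ ?_).trans_lt (ENNReal.ofReal_lt_top (r := C))
  have h_min_nonneg : 0 ≤ᵐ[μ] fun x ↦ min (f x) n := by
    filter_upwards [hf_nonneg] with x hx using le_min hx n.cast_nonneg
  have h_min_int : Integrable (fun x ↦ min (f x) n) μ := by
    refine .of_bound (hf.aemeasurable.min aemeasurable_const).aestronglyMeasurable n ?_
    filter_upwards [h_min_nonneg] with x hx
    rw [norm_of_nonneg hx]
    exact min_le_right _ _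
  rw [← ofReal_integral_eq_lintegral_ofReal h_min_int h_min_nonneg]
  exact ENNReal.ofReal_le_ofReal (hC n)

end Truncation

section DonskerVaradhan

variable {Ω : Type*} [MeasurableSpace Ω] {P Q : Measure Ω}

noncomputable def donskerVaradhan (P Q : Measure Ω) (T : Ω → ℝ) : ℝ :=
  ∫ x, T x ∂P - log (∫ x, exp (T x) ∂Q)

lemma donskerVaradhan_le_integral_llr [IsProbabilityMeasure P] [SigmaFinite Q] [NeZero Q]
    (hPQ : P ≪ Q) (h_int : Integrable (llr P Q) P) {T : Ω → ℝ} (hTP : Integrable T P)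
    (hTQ : Integrable (fun x ↦ exp (T x)) Q) :
    donskerVaradhan P Q T ≤ ∫ x, llr P Q x ∂P := by
  have := isProbabilityMeasure_tilted hTQ
  have h_gibbs := InformationTheory.integral_llr_add_sub_measure_univ_nonneg
    (hPQ.trans (absolutelyContinuous_tilted hTQ)) (integrable_llr_tilted_right hPQ hTP h_int hTQ)
  rw [integral_llr_tilted_right hPQ hTP hTQ h_int] at h_gibbs
  simp only [probReal_univ, add_sub_cancel_right] at h_gibbs
  unfold donskerVaradhan
  linarith

lemma integrable_negPart_llr [SigmaFinite P] [IsFiniteMeasure Q] (hPQ : P ≪ Q) :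
    Integrable (fun x ↦ (llr P Q x)⁻) P := by
  -- `(llr P Q)⁻ ≤ exp (-llr P Q) = dQ/dP`, `P`-a.e.
  refine (Measure.integrable_toReal_rnDeriv (μ := Q) (ν := P)).mono'
    (measurable_llr P Q).negPart.aestronglyMeasurable ?_
  filter_upwards [exp_neg_llr hPQ] with x hx
  rw [← hx, norm_of_nonneg (negPart_nonneg _), negPart_def]
  exact max_le (by linarith [add_one_le_exp (-llr P Q x)]) (exp_pos _).le

-- Clipping the density rather than `llr P Q` sends the null set of `dP/dQ` to `-n` instead of
-- `log 0 = 0`, which keeps `∫ exp (truncLlr P Q n) ∂Q` close to `1`.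
noncomputable def truncLlr (P Q : Measure Ω) (n : ℕ) (x : Ω) : ℝ :=
  log (max (min (P.rnDeriv Q x).toReal (exp n)) (exp (-n)))

@[fun_prop]
lemma measurable_truncLlr (n : ℕ) : Measurable (truncLlr P Q n) := by
  unfold truncLlr; fun_prop

lemma exp_truncLlr (n : ℕ) (x : Ω) :
    exp (truncLlr P Q n x) = max (min (P.rnDeriv Q x).toReal (exp n)) (exp (-n)) :=
  exp_log ((exp_pos _).trans_le (le_max_right _ _))

lemma abs_truncLlr_le (n : ℕ) (x : Ω) : |truncLlr P Q n x| ≤ n := by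
  have h_pos : 0 < max (min (P.rnDeriv Q x).toReal (exp n)) (exp (-n)) :=
    (exp_pos _).trans_le (le_max_right _ _)
  rw [abs_le, truncLlr, le_log_iff_exp_le h_pos, log_le_iff_le_exp h_pos]
  exact ⟨le_max_right _ _,
    max_le (min_le_right _ _) (exp_le_exp.2 (neg_le_self n.cast_nonneg))⟩

lemma integrable_truncLlr {μ : Measure Ω} [IsFiniteMeasure μ] (n : ℕ) :
    Integrable (truncLlr P Q n) μ :=
  .of_bound (measurable_truncLlr n).aestronglyMeasurable n (.of_forall (abs_truncLlr_le n))

lemma integrable_exp_truncLlr {μ : Measure Ω} [IsFiniteMeasure μ] (n : ℕ) :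
    Integrable (fun x ↦ exp (truncLlr P Q n x)) μ := by
  refine .of_bound (by fun_prop) (exp n) (.of_forall fun x ↦ ?_)
  rw [norm_of_nonneg (exp_pos _).le, exp_le_exp]
  exact (abs_le.1 (abs_truncLlr_le n x)).2

lemma truncLlr_ae_eq [SigmaFinite P] [SigmaFinite Q] (hPQ : P ≪ Q) (n : ℕ) :
    truncLlr P Q n =ᵐ[P] fun x ↦ max (min (llr P Q x) n) (-n) := by
  filter_upwards [Measure.rnDeriv_pos hPQ, hPQ.ae_le (Measure.rnDeriv_lt_top P Q)]
    with x h_pos h_lt_top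
  apply exp_injective
  rw [exp_truncLlr, exp_monotone.map_max, exp_monotone.map_min, llr,
    exp_log (ENNReal.toReal_pos h_pos.ne' h_lt_top.ne)]

lemma integral_truncLlr_sub_exp_neg_le_donskerVaradhan [IsProbabilityMeasure P]
    [IsProbabilityMeasure Q] (hPQ : P ≪ Q) (n : ℕ) :
    ∫ x, truncLlr P Q n x ∂P - exp (-n) ≤ donskerVaradhan P Q (truncLlr P Q n) := by
  have h_exp_le : ∫ x, exp (truncLlr P Q n x) ∂Q ≤ 1 + exp (-n) := by
    calc ∫ x, exp (truncLlr P Q n x) ∂Q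
        ≤ ∫ x, ((P.rnDeriv Q x).toReal + exp (-n)) ∂Q := by
          refine integral_mono (integrable_exp_truncLlr n)
            (Measure.integrable_toReal_rnDeriv.add (integrable_const _)) fun x ↦ ?_
          rw [exp_truncLlr]
          exact max_le ((min_le_left _ _).trans (le_add_of_nonneg_right (exp_pos _).le))
            (le_add_of_nonneg_left ENNReal.toReal_nonneg)
      _ = 1 + exp (-n) := by
          rw [integral_add Measure.integrable_toReal_rnDeriv (integrable_const _),
            Measure.integral_toReal_rnDeriv hPQ]
          simp
  have h_pos : 0 < ∫ x, exp (truncLlr P Q n x) ∂Q := integral_exp_pos (integrable_exp_truncLlr n)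
  have := log_le_sub_one_of_pos h_pos
  unfold donskerVaradhan
  linarith

lemma tendsto_donskerVaradhan_truncLlr [IsProbabilityMeasure P] [IsProbabilityMeasure Q]
    (hPQ : P ≪ Q) (h_int : Integrable (llr P Q) P) :
    Tendsto (fun n : ℕ ↦ donskerVaradhan P Q (truncLlr P Q n)) atTop
      (𝓝 (∫ x, llr P Q x ∂P)) := by
  have h_integral : Tendsto (fun n : ℕ ↦ ∫ x, truncLlr P Q n x ∂P) atTop
      (𝓝 (∫ x, llr P Q x ∂P)) := by
    refine tendsto_integral_of_dominated_convergence (fun x ↦ |llr P Q x|)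
      (fun n ↦ (measurable_truncLlr n).aestronglyMeasurable) h_int.abs (fun n ↦ ?_) ?_
    · filter_upwards [truncLlr_ae_eq hPQ n] with x hx
      rw [hx, norm_eq_abs]
      exact abs_max_min_neg_le n.cast_nonneg
    · filter_upwards [ae_all_iff.2 (truncLlr_ae_eq hPQ)] with x hx
      simpa only [hx] using tendsto_max_min_natCast_neg (llr P Q x)
  have h_lower : Tendsto (fun n : ℕ ↦ ∫ x, truncLlr P Q n x ∂P - exp (-n)) atTop
      (𝓝 (∫ x, llr P Q x ∂P)) := by
    simpa using h_integral.sub (tendsto_exp_neg_atTop_nhds_zero.comp tendsto_natCast_atTop_atTop)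
  exact tendsto_of_tendsto_of_tendsto_of_le_of_le h_lower tendsto_const_nhds
    (integral_truncLlr_sub_exp_neg_le_donskerVaradhan hPQ)
    fun n ↦ donskerVaradhan_le_integral_llr hPQ h_int (integrable_truncLlr n)
      (integrable_exp_truncLlr n)

lemma integrable_llr_of_forall_donskerVaradhan_truncLlr_le [IsProbabilityMeasure P]
    [IsProbabilityMeasure Q] (hPQ : P ≪ Q) {M : ℝ}
    (hM : ∀ n : ℕ, donskerVaradhan P Q (truncLlr P Q n) ≤ M) :
    Integrable (llr P Q) P := by
  have h_neg := integrable_negPart_llr hPQ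
  have h_pos : Integrable (fun x ↦ (llr P Q x)⁺) P := by
    refine integrable_of_forall_integral_min_le (measurable_llr P Q).posPart.aestronglyMeasurable
      (.of_forall fun x ↦ posPart_nonneg _) (C := M + 1 + ∫ x, (llr P Q x)⁻ ∂P) fun n ↦ ?_
    have h_mono : ∫ x, min (llr P Q x)⁺ n ∂P ≤ ∫ x, (truncLlr P Q n x + (llr P Q x)⁻) ∂P := by
      refine integral_mono_of_nonneg (.of_forall fun x ↦ le_min (posPart_nonneg _) n.cast_nonneg)
        ((integrable_truncLlr n).add h_neg) ?_
      filter_upwards [truncLlr_ae_eq hPQ n] with x hx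
      rw [hx]
      exact min_posPart_le_max_min_neg_add_negPart n.cast_nonneg
    rw [integral_add (integrable_truncLlr n) h_neg] at h_mono
    linarith [hM n, integral_truncLlr_sub_exp_neg_le_donskerVaradhan hPQ n,
      exp_le_one_iff.2 (neg_nonpos.2 n.cast_nonneg)]
  exact (h_pos.sub h_neg).congr (.of_forall fun x ↦ posPart_sub_negPart _)

end DonskerVaradhan

/-- Donsker–Varadhan dual representation of the KL divergence:
`D_KL(P‖Q) = sup_T ( E_P[T] − log E_Q[e^T] )`, the supremum being over all
measurable `T : Ω → ℝ` with `E_P[T]` and `E_Q[e^T]` finite. -/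
theorem klDiv_eq_sSup_donsker_varadhan {Ω : Type*} [MeasurableSpace Ω]
    (P Q : Measure Ω) [IsProbabilityMeasure P] [IsProbabilityMeasure Q]
    (hPQ : P ≪ Q) :
    klDiv P Q = sSup {r : ℝ | ∃ T : Ω → ℝ, Measurable T ∧
      Integrable T P ∧ Integrable (fun x => Real.exp (T x)) Q ∧
      r = (∫ x, T x ∂P) - Real.log (∫ x, Real.exp (T x) ∂Q)} := by
  set S := {r : ℝ | ∃ T : Ω → ℝ, Measurable T ∧
      Integrable T P ∧ Integrable (fun x => Real.exp (T x)) Q ∧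
      r = (∫ x, T x ∂P) - Real.log (∫ x, Real.exp (T x) ∂Q)}
  have h_trunc_mem (n : ℕ) : donskerVaradhan P Q (truncLlr P Q n) ∈ S :=
    ⟨truncLlr P Q n, measurable_truncLlr n, integrable_truncLlr n, integrable_exp_truncLlr n, rfl⟩
  by_cases h_int : Integrable (llr P Q) P
  · have h_le : ∀ r ∈ S, r ≤ klDiv P Q := by
      rintro r ⟨T, -, hTP, hTQ, rfl⟩
      exact donskerVaradhan_le_integral_llr hPQ h_int hTP hTQ
    refine le_antisymm ?_ (csSup_le ⟨_, h_trunc_mem 0⟩ h_le)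
    exact le_of_tendsto' (tendsto_donskerVaradhan_truncLlr hPQ h_int)
      fun n ↦ le_csSup ⟨_, h_le⟩ (h_trunc_mem n)
  · rw [show klDiv P Q = 0 from integral_undef h_int, Real.sSup_of_not_bddAbove]
    rintro ⟨M, hM⟩
    exact h_int <|
      integrable_llr_of_forall_donskerVaradhan_truncLlr_le hPQ fun n ↦ hM (h_trunc_mem n)
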